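/- arXiv:0901.2542 — 4 statements merged into one kernel-verified Lean document; each statement's English description precedes it below -/
import Mathlib

section
/- Let T be a trace-preserving linear map on d×d complex matrices, ρ a density matrix, and A a Hermitian d×d matrix. Define the delayed vectors v_τ ∈ ℝ^ℕ by (v_τ)_k = tr(A · T^(τ+k-1)(ρ)) for τ, k ∈ ℕ, and let 𝒱 = span{v_τ : τ ∈ ℕ₀}. Let 𝒞 be the real vector space of Hermitian matrices H such that tr(H · T^t(ρ)) is independent of t ∈ ℕ₀. Then dim 𝒞 + dim 𝒱 ≤ d² + 1. -/
open Matrix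
open scoped ComplexOrder

/-!
The delayed vectors are the images, under the ℂ-linear map `X ↦ (tr (A Tᵏ X))ₖ`, of the orbit
`ρ, Tρ, T²ρ, …`, whose span lies in `D + ℂρ` with `D = span {Tᵗρ - ρ}`; so they span at most
`dim D + 1` complex dimensions. A conserved `H` lies in the orthogonal complement of `D` for the
nondegenerate pairing `(X, H) ↦ tr (X H)`, which has dimension `d² - dim D`. Hermitian matrices
and real sequences are both fixed by a conjugation, so their real ranks are bounded by the complex
ranks of their spans, and the two bounds add up to `d² + 1`.
-/

open Cardinal Module Submodule Set

section RealForm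

variable {V : Type*} [AddCommGroup V] [Module ℂ V] [Module ℝ V] [IsScalarTower ℝ ℂ V]
  [StarAddMonoid V] [StarModule ℂ V]

theorem LinearIndependent.complex_of_star_eq {ι : Type*} {f : ι → V}
    (hf : ∀ i, star (f i) = f i) (h : LinearIndependent ℝ f) : LinearIndependent ℂ f := by
  rw [linearIndependent_iff'] at h ⊢
  -- Averaging a relation with its conjugate gives a real relation with the real parts.
  have re_eq_zero : ∀ (s : Finset ι) (g : ι → ℂ), ∑ i ∈ s, g i • f i = 0 →
      ∀ i ∈ s, (g i).re = 0 := by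
    intro s g hg
    have hconj : ∑ i ∈ s, star (g i) • f i = 0 := by
      simpa [star_sum, star_smul, hf] using congrArg star hg
    refine h s (fun i => (g i).re) ?_
    calc ∑ i ∈ s, (g i).re • f i = ∑ i ∈ s, (2⁻¹ : ℂ) • (g i • f i + star (g i) • f i) := by
          refine Finset.sum_congr rfl fun i _ => ?_
          rw [← algebraMap_smul ℂ (g i).re (f i), Complex.coe_algebraMap, Complex.re_eq_add_conj,
            div_eq_inv_mul, ← smul_smul, add_smul]
          rfl
      _ = 0 := by rw [← Finset.smul_sum, Finset.sum_add_distrib, hg, hconj, add_zero, smul_zero]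
  intro s g hg i hi
  have him := re_eq_zero s (fun j => -Complex.I * g j)
    (by simp_rw [mul_smul, ← Finset.smul_sum, hg, smul_zero]) i hi
  exact Complex.ext (re_eq_zero s g hg i hi) (by simpa using him)

theorem rank_span_real_le_rank_span_complex {s : Set V} (hs : ∀ x ∈ s, star x = x) :
    Module.rank ℝ (span ℝ s) ≤ Module.rank ℂ (span ℂ s) := by
  obtain ⟨b, hbs, hspan, hli⟩ := exists_linearIndependent ℝ s
  have hliC : LinearIndependent ℂ ((↑) : b → V) :=
    hli.complex_of_star_eq fun x => hs x (hbs x.2)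
  calc Module.rank ℝ (span ℝ s) = #b := by rw [← hspan, rank_span_set hli]
    _ = Module.rank ℂ (span ℂ b) := (rank_span_set hliC).symm
    _ ≤ Module.rank ℂ (span ℂ s) := Submodule.rank_mono (span_mono hbs)

end RealForm

theorem rank_span_real_le_rank_span_ofReal {ι α : Type*} (v : ι → α → ℝ) :
    Module.rank ℝ (span ℝ (range v)) ≤
      Module.rank ℂ (span ℂ (range fun i a => (v i a : ℂ))) := by
  let ofRealPi : (α → ℝ) →ₗ[ℝ] (α → ℂ) := LinearMap.compLeft Complex.ofRealAm.toLinearMap α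
  have hinj : Function.Injective ofRealPi := fun x y hxy =>
    funext fun a => Complex.ofReal_injective (congrFun hxy a)
  calc Module.rank ℝ (span ℝ (range v))
      = Module.rank ℝ ((span ℝ (range v)).map ofRealPi) := (rank_map_eq hinj _).symm
    _ = Module.rank ℝ (span ℝ (range fun i a => (v i a : ℂ))) := by
        rw [map_span, ← range_comp]
        rfl
    _ ≤ _ := rank_span_real_le_rank_span_complex <| by
        rintro _ ⟨i, rfl⟩
        funext a
        exact Complex.conj_ofReal _

theorem finrank_span_range_le_finrank_span_range_sub_add_one {K V ι : Type*} [DivisionRing K]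
    [AddCommGroup V] [Module K V] [FiniteDimensional K V] (f : ι → V) (x : V) :
    finrank K (span K (range f)) ≤ finrank K (span K (range fun i => f i - x)) + 1 := by
  have hle : span K (range f) ≤ span K (range fun i => f i - x) ⊔ K ∙ x := by
    rw [span_le]
    rintro _ ⟨i, rfl⟩
    rw [← sub_add_cancel (f i) x]
    exact add_mem (mem_sup_left (subset_span ⟨i, rfl⟩)) (mem_sup_right (mem_span_singleton_self x))
  calc finrank K (span K (range f))
      ≤ finrank K ↥(span K (range fun i => f i - x) ⊔ K ∙ x) := Submodule.finrank_mono hle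
    _ ≤ _ := (Submodule.finrank_add_le_finrank_add_finrank _ _).trans
        (add_le_add le_rfl (by simpa using finrank_span_le_card (R := K) ({x} : Set V)))

namespace Matrix

variable (n R : Type*) [Fintype n] [CommRing R]

noncomputable def traceForm : LinearMap.BilinForm R (Matrix n n R) :=
  (LinearMap.mul R (Matrix n n R)).compr₂ (traceLinearMap n R R)

variable {n R}

@[simp]
theorem traceForm_apply (X Y : Matrix n n R) : traceForm n R X Y = (X * Y).trace := rfl

theorem traceForm_nondegenerate [DecidableEq n] : (traceForm n R).Nondegenerate :=
  ⟨fun X hX => ext_iff_trace_mul_right.2 fun Y => by simpa using hX Y,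
   fun Y hY => ext_iff_trace_mul_left.2 fun X => by simpa using hY X⟩

noncomputable def expectationMap (A : Matrix n n R) (T : Module.End R (Matrix n n R)) :
    Matrix n n R →ₗ[R] ℕ → R :=
  LinearMap.pi fun k => traceForm n R A ∘ₗ T ^ k

@[simp]
theorem expectationMap_apply (A : Matrix n n R) (T : Module.End R (Matrix n n R))
    (X : Matrix n n R) (k : ℕ) : expectationMap A T X k = (A * (T ^ k) X).trace := rfl

theorem mem_traceForm_orthogonal_span_orbit_sub {T : Module.End R (Matrix n n R)}
    {ρ H : Matrix n n R} (hH : ∀ t : ℕ, (H * (T ^ t) ρ).trace = (H * ρ).trace) :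
    H ∈ (traceForm n R).orthogonal (span R (range fun t => (T ^ t) ρ - ρ)) := by
  intro X hX
  have hker : span R (range fun t => (T ^ t) ρ - ρ) ≤ LinearMap.ker ((traceForm n R).flip H) := by
    rw [span_le]
    rintro _ ⟨t, rfl⟩
    simp [trace_mul_comm _ H, hH t]
  exact hker hX

end Matrix

section Dimensions

variable {n : Type*} [Fintype n] (T : Module.End ℂ (Matrix n n ℂ)) (ρ : Matrix n n ℂ)

theorem rank_span_conserved_le [DecidableEq n] :
    Module.rank ℝ (span ℝ {H : Matrix n n ℂ | H.IsHermitian ∧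
        ∀ t : ℕ, (H * (T ^ t) ρ).trace = (H * ρ).trace}) ≤
      (Fintype.card n ^ 2 - finrank ℂ (span ℂ (range fun t => (T ^ t) ρ - ρ)) : ℕ) :=
  calc _ ≤ Module.rank ℂ (span ℂ {H : Matrix n n ℂ | H.IsHermitian ∧
          ∀ t : ℕ, (H * (T ^ t) ρ).trace = (H * ρ).trace}) :=
        rank_span_real_le_rank_span_complex fun H hH => hH.1
    _ ≤ Module.rank ℂ ((traceForm n ℂ).orthogonal (span ℂ (range fun t => (T ^ t) ρ - ρ))) :=
        Submodule.rank_mono <| span_le.2 fun H hH => mem_traceForm_orthogonal_span_orbit_sub hH.2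
    _ = _ := by
        rw [← finrank_eq_rank, LinearMap.BilinForm.finrank_orthogonal traceForm_nondegenerate,
          finrank_matrix, sq, finrank_self, mul_one]

theorem rank_span_delayed_le (A : Matrix n n ℂ) (v : ℕ → ℕ → ℝ)
    (hv : ∀ τ k : ℕ, (v τ k : ℂ) = (A * (T ^ (τ + k)) ρ).trace) :
    Module.rank ℝ (span ℝ (range v)) ≤
      (finrank ℂ (span ℂ (range fun t => (T ^ t) ρ - ρ)) + 1 : ℕ) := by
  have hvE : (fun τ k => (v τ k : ℂ)) = expectationMap A T ∘ fun τ => (T ^ τ) ρ := by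
    funext τ k
    rw [hv, Function.comp_apply, expectationMap_apply, ← Module.End.mul_apply, ← pow_add, add_comm]
  calc Module.rank ℝ (span ℝ (range v)) ≤ Module.rank ℂ (span ℂ (range fun τ k => (v τ k : ℂ))) :=
        rank_span_real_le_rank_span_ofReal v
    _ = Module.rank ℂ ((span ℂ (range fun τ => (T ^ τ) ρ)).map (expectationMap A T)) := by
        rw [map_span, ← range_comp, hvE]
    _ ≤ _ := by
        rw [← finrank_eq_rank, Nat.cast_le]
        exact (Submodule.finrank_map_le _ _).trans
          (finrank_span_range_le_finrank_span_range_sub_add_one _ ρ)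

end Dimensions

theorem dim_conserved_add_dim_delayed_le_general (d : ℕ)
    (T : Module.End ℂ (Matrix (Fin d) (Fin d) ℂ))
    (ρ : Matrix (Fin d) (Fin d) ℂ)
    (A : Matrix (Fin d) (Fin d) ℂ)
    (v : ℕ → ℕ → ℝ)
    (hv : ∀ τ k : ℕ, (v τ k : ℂ) = (A * ((T ^ (τ + k)) ρ)).trace) :
    Module.rank ℝ ↥(Submodule.span ℝ
        {H : Matrix (Fin d) (Fin d) ℂ | H.IsHermitian ∧
          ∀ t : ℕ, (H * ((T ^ t) ρ)).trace = (H * ρ).trace}) +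
      Module.rank ℝ ↥(Submodule.span ℝ (Set.range v)) ≤ ((d ^ 2 + 1 : ℕ) : Cardinal) := by
  set D := span ℂ (range fun t => (T ^ t) ρ - ρ)
  have hD : finrank ℂ D ≤ d ^ 2 := by simpa [sq, finrank_matrix] using Submodule.finrank_le D
  calc _ ≤ ((d ^ 2 - finrank ℂ D : ℕ) : Cardinal) + (finrank ℂ D + 1 : ℕ) := by
        simpa using add_le_add (rank_span_conserved_le T ρ) (rank_span_delayed_le T ρ A v hv)
    _ = ((d ^ 2 + 1 : ℕ) : Cardinal) := by rw [← Nat.cast_add]; congr 1; omega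

/-- dim 𝒞 + dim 𝒱 ≤ d² + 1 for trace-preserving linear evolution. -/
theorem dim_conserved_add_dim_delayed_le (d : ℕ)
    (T : Module.End ℂ (Matrix (Fin d) (Fin d) ℂ))
    (hT : ∀ X, (T X).trace = X.trace)
    (ρ : Matrix (Fin d) (Fin d) ℂ) (hρ : ρ.PosSemidef) (hρ1 : ρ.trace = 1)
    (A : Matrix (Fin d) (Fin d) ℂ) (hA : A.IsHermitian)
    (v : ℕ → ℕ → ℝ)
    (hv : ∀ τ k : ℕ, (v τ k : ℂ) = (A * ((T ^ (τ + k)) ρ)).trace) :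
    Module.rank ℝ ↥(Submodule.span ℝ
        {H : Matrix (Fin d) (Fin d) ℂ | H.IsHermitian ∧
          ∀ t : ℕ, (H * ((T ^ t) ρ)).trace = (H * ρ).trace}) +
      Module.rank ℝ ↥(Submodule.span ℝ (Set.range v)) ≤ ((d ^ 2 + 1 : ℕ) : Cardinal) :=
  dim_conserved_add_dim_delayed_le_general d T ρ A v hv
end

section
/- Let T be a trace-preserving linear map on M_d(ℂ), ρ a density matrix, and A Hermitian. Suppose T is ergodic with respect to both A and ρ, i.e., the orbits {(T*)^t(A) : t ∈ ℕ₀} and {T^t(ρ) : t ∈ ℕ₀} each span all of M_d(ℂ). Then the space 𝒱 spanned by the delayed vectors v_τ, with (v_τ)_k = tr(A · T^(τ+k-1)(ρ)), has dimension exactly d². -/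
/-!
The observation map `Ψ X = (tr (A Tᵏ X))ₖ` is injective: by the adjoint relation
`tr (A Tᵏ X) = tr ((T*)ᵏ A · X)`, a matrix in its kernel is trace-orthogonal to the orbit of `A`
under `T*`, which spans all matrices, so it vanishes. The complexified delayed vectors are the
images `Ψ (T^τ ρ)` of the orbit of `ρ`, which also spans, so they span the range of `Ψ`, a space
of dimension `d²`. Finally a real family of sequences spans a real space of the same dimension as
the complex space spanned by its complexification, since real linear independence survives
complexification (split complex coefficients into real and imaginary parts).
-/

open Matrix
open scoped ComplexOrder

section Complexify

variable {κ : Type*}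

noncomputable def complexify : (κ → ℝ) →ₗ[ℝ] (κ → ℂ) :=
  LinearMap.compLeft Complex.ofRealAm.toLinearMap κ

@[simp]
lemma complexify_apply (f : κ → ℝ) (k : κ) : complexify f k = (f k : ℂ) := rfl

lemma complexify_injective : Function.Injective (complexify : (κ → ℝ) → (κ → ℂ)) :=
  Complex.ofReal_injective.comp_left

lemma LinearIndependent.complexify {ι : Type*} {u : ι → κ → ℝ} (hu : LinearIndependent ℝ u) :
    LinearIndependent ℂ (complexify ∘ u) := by
  rw [linearIndependent_iff'] at hu ⊢
  intro s g hg i hi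
  have hcoord (k : κ) : ∑ j ∈ s, g j * (u j k : ℂ) = 0 := by
    simpa [Finset.sum_apply] using congrFun hg k
  have hre := hu s (fun j => (g j).re) <| funext fun k => by
    simpa [Complex.re_sum, Finset.sum_apply] using congrArg Complex.re (hcoord k)
  have him := hu s (fun j => (g j).im) <| funext fun k => by
    simpa [Complex.im_sum, Finset.sum_apply] using congrArg Complex.im (hcoord k)
  exact Complex.ext (hre i hi) (him i hi)

lemma rank_span_eq_rank_span_complexify (S : Set (κ → ℝ)) :
    Module.rank ℝ (Submodule.span ℝ S) = Module.rank ℂ (Submodule.span ℂ (complexify '' S)) := by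
  obtain ⟨b, hbS, hspan, hli⟩ := exists_linearIndependent ℝ S
  have hliC : LinearIndepOn ℂ id (complexify '' b) := LinearIndepOn.id_image hli.complexify
  have hspanC : Submodule.span ℂ (complexify '' b) = Submodule.span ℂ (complexify '' S) := by
    refine le_antisymm (Submodule.span_mono (Set.image_mono hbS)) (Submodule.span_le.2 ?_)
    rintro _ ⟨s, hs, rfl⟩
    have hs' : complexify s ∈ Submodule.span ℝ (complexify '' b) := by
      rw [Submodule.span_image, hspan]
      exact Submodule.mem_map_of_mem (Submodule.subset_span hs)
    exact Submodule.span_le_restrictScalars ℝ ℂ _ hs'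
  rw [← hspan, ← hspanC, rank_span_set hli, rank_span_set hliC,
    Cardinal.mk_image_eq complexify_injective]

end Complexify

section Observation

variable {R n : Type*} [CommRing R] [Fintype n]

noncomputable def observationSeq (T : Module.End R (Matrix n n R)) (A : Matrix n n R) :
    Matrix n n R →ₗ[R] (ℕ → R) :=
  LinearMap.pi fun k => traceLinearMap n R R ∘ₗ LinearMap.mulLeft R A ∘ₗ T ^ k

@[simp]
lemma observationSeq_apply (T : Module.End R (Matrix n n R)) (A X : Matrix n n R) (k : ℕ) :
    observationSeq T A X k = (A * (T ^ k) X).trace := rfl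

lemma trace_mul_pow_apply_of_adjoint {T Tstar : Module.End R (Matrix n n R)}
    (hadj : ∀ B X : Matrix n n R, (B * T X).trace = (Tstar B * X).trace) (k : ℕ)
    (A X : Matrix n n R) : (A * (T ^ k) X).trace = ((Tstar ^ k) A * X).trace := by
  induction k generalizing X with
  | zero => simp
  | succ k ih =>
    rw [pow_succ, Module.End.mul_apply, ih, hadj, ← Module.End.mul_apply, ← pow_succ']

lemma eq_zero_of_trace_mul_eq_zero_of_span_eq_top {s : Set (Matrix n n R)}
    (hs : Submodule.span R s = ⊤) {X : Matrix n n R} (hX : ∀ B ∈ s, (B * X).trace = 0) :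
    X = 0 := by
  have hfun : traceLinearMap n R R ∘ₗ LinearMap.mulRight R X = 0 :=
    LinearMap.ext_on hs fun B hB => hX B hB
  rw [ext_iff_trace_mul_left]
  intro B
  simpa using LinearMap.congr_fun hfun B

lemma observationSeq_injective {T Tstar : Module.End R (Matrix n n R)} {A : Matrix n n R}
    (hadj : ∀ B X : Matrix n n R, (B * T X).trace = (Tstar B * X).trace)
    (hergA : Submodule.span R (Set.range fun t : ℕ => (Tstar ^ t) A) = ⊤) :
    Function.Injective (observationSeq T A) := by
  rw [injective_iff_map_eq_zero]
  intro X hX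
  refine eq_zero_of_trace_mul_eq_zero_of_span_eq_top hergA ?_
  rintro _ ⟨t, rfl⟩
  rw [← trace_mul_pow_apply_of_adjoint hadj]
  exact congrFun hX t

end Observation

theorem dim_delayed_eq_of_ergodic_general (d : ℕ)
    (T Tstar : Module.End ℂ (Matrix (Fin d) (Fin d) ℂ))
    (hadj : ∀ (B X : Matrix (Fin d) (Fin d) ℂ), (B * T X).trace = (Tstar B * X).trace)
    (ρ : Matrix (Fin d) (Fin d) ℂ)
    (A : Matrix (Fin d) (Fin d) ℂ)
    (hergA : Submodule.span ℂ (Set.range fun t : ℕ => (Tstar ^ t) A) = ⊤)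
    (hergρ : Submodule.span ℂ (Set.range fun t : ℕ => (T ^ t) ρ) = ⊤)
    (v : ℕ → ℕ → ℝ)
    (hv : ∀ τ k : ℕ, (v τ k : ℂ) = (A * ((T ^ (τ + k)) ρ)).trace) :
    Module.rank ℝ ↥(Submodule.span ℝ (Set.range v)) = ((d ^ 2 : ℕ) : Cardinal) := by
  have hdelayed : complexify ∘ v = observationSeq T A ∘ fun τ => (T ^ τ) ρ := by
    funext τ k
    simp [hv, ← Module.End.mul_apply, ← pow_add, add_comm]
  rw [rank_span_eq_rank_span_complexify, ← Set.range_comp, hdelayed, Set.range_comp,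
    Submodule.span_image, hergρ, Submodule.map_top,
    rank_range_of_injective _ (observationSeq_injective hadj hergA), rank_matrix'']
  simp [sq]

/-- if `T` is ergodic w.r.t. both `A` and `ρ`, the space spanned by the
delayed vectors has dimension exactly `d²`. -/
theorem dim_delayed_eq_of_ergodic (d : ℕ)
    (T Tstar : Module.End ℂ (Matrix (Fin d) (Fin d) ℂ))
    (hT : ∀ X, (T X).trace = X.trace)
    (hadj : ∀ (B X : Matrix (Fin d) (Fin d) ℂ), (B * T X).trace = (Tstar B * X).trace)
    (ρ : Matrix (Fin d) (Fin d) ℂ) (hρ : ρ.PosSemidef) (hρ1 : ρ.trace = 1)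
    (A : Matrix (Fin d) (Fin d) ℂ) (hA : A.IsHermitian)
    (hergA : Submodule.span ℂ (Set.range fun t : ℕ => (Tstar ^ t) A) = ⊤)
    (hergρ : Submodule.span ℂ (Set.range fun t : ℕ => (T ^ t) ρ) = ⊤)
    (v : ℕ → ℕ → ℝ)
    (hv : ∀ τ k : ℕ, (v τ k : ℂ) = (A * ((T ^ (τ + k)) ρ)).trace) :
    Module.rank ℝ ↥(Submodule.span ℝ (Set.range v)) = ((d ^ 2 : ℕ) : Cardinal) :=
  dim_delayed_eq_of_ergodic_general d T Tstar hadj ρ A hergA hergρ v hv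
end

section
/- Let M be a complex square matrix with spectral radius at most 1 such that every Jordan block for an eigenvalue of modulus 1 has size 1. Then M is similar to a contraction: there exists an invertible matrix S such that ‖S M S⁻¹‖ ≤ 1 in operator norm. -/
/-!
Decompose `ℂⁿ` into the generalized eigenspaces of `M` and make them mutually orthogonal. On a
block with `|μ| < 1` the restriction is `μ + N` with `N` nilpotent, so its spectral radius is
`|μ| < 1` and by Gelfand's formula its powers eventually have norm `≤ 1`; on a block with
`|μ| = 1` the restriction is `μ • 1`, an isometry. Hence some power `M ^ k` is a contraction,
and then `M` is a contraction for the Hilbert norm `‖x‖² + ‖M x‖² + ⋯ + ‖M ^ (k - 1) x‖²`.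
-/

open Matrix Module
open scoped Matrix.Norms.L2Operator

open Filter Function Set

theorem spectrum_subset_singleton_of_isNilpotent_sub {R A : Type*} [Field R] [Ring A]
    [Algebra R A] {a : A} {μ : R} (ha : IsNilpotent (a - algebraMap R A μ)) :
    spectrum R a ⊆ {μ} := by
  intro z hz
  by_contra hzμ
  refine hz ?_
  have hunit : IsUnit (algebraMap R A (z - μ)) :=
    (Ne.isUnit (sub_ne_zero.2 hzμ)).map (algebraMap R A)
  have := ha.neg.isUnit_add_right_of_commute hunit (Algebra.commutes _ _).symm
  rwa [map_sub, neg_sub, sub_add_sub_cancel'] at this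

theorem eventually_norm_pow_le_one_of_spectralRadius_lt_one {A : Type*} [NormedRing A]
    [NormedAlgebra ℂ A] [CompleteSpace A] {a : A} (ha : spectralRadius ℂ a < 1) :
    ∀ᶠ n in atTop, ‖a ^ n‖ ≤ 1 := by
  have hgelfand := spectrum.pow_norm_pow_one_div_tendsto_nhds_spectralRadius a
  filter_upwards [hgelfand.eventually_lt_const ha, eventually_ge_atTop 1] with n hn hn1
  rw [ENNReal.ofReal_lt_one] at hn
  by_contra! h
  exact hn.not_ge (Real.one_le_rpow h.le (by positivity))

namespace Module.End

theorem genEigenspace_conj {R M N : Type*} [CommRing R] [AddCommGroup M] [Module R M]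
    [AddCommGroup N] [Module R N] (e : M ≃ₗ[R] N) (f : End R M) (μ : R) (k : ℕ∞) :
    (e.conj f).genEigenspace μ k = (f.genEigenspace μ k).map (e : M →ₗ[R] N) := by
  ext y
  have hconj (l : ℕ) : (e.conj f - μ • 1) ^ l = e.conjAlgEquiv R ((f - μ • 1) ^ l) := by
    rw [map_pow, map_sub, map_smul, map_one]
    rfl
  simp only [Submodule.mem_map_equiv, mem_genEigenspace, LinearMap.mem_ker, hconj,
    LinearEquiv.conjAlgEquiv_apply, LinearMap.comp_apply, LinearEquiv.coe_coe,
    LinearEquiv.map_eq_zero_iff]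

theorem norm_pow_apply_eq_of_mem_eigenspace {𝕜 E : Type*} [NormedField 𝕜]
    [SeminormedAddCommGroup E] [NormedSpace 𝕜 E] {f : End 𝕜 E} {μ : 𝕜} (hμ : ‖μ‖ = 1) {x : E}
    (hx : x ∈ f.eigenspace μ) (n : ℕ) : ‖(f ^ n) x‖ = ‖x‖ := by
  obtain rfl | hx0 := eq_or_ne x 0
  · simp
  · rw [HasEigenvector.pow_apply ⟨hx, hx0⟩, norm_smul, norm_pow, hμ, one_pow, one_mul]

variable {E : Type*} [NormedAddCommGroup E] [NormedSpace ℂ E] [FiniteDimensional ℂ E]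
  {f : End ℂ E} {μ : ℂ}

theorem eventually_norm_pow_apply_le_of_isNilpotent_sub (hμ : ‖μ‖ < 1)
    (hf : IsNilpotent (f - algebraMap ℂ (End ℂ E) μ)) :
    ∀ᶠ n in atTop, ∀ x, ‖(f ^ n) x‖ ≤ ‖x‖ := by
  set a := toContinuousLinearMap E f
  have hspec : spectrum ℂ a ⊆ {μ} := by
    refine spectrum_subset_singleton_of_isNilpotent_sub ?_
    simpa [a, map_sub, AlgEquiv.commutes] using hf.map (toContinuousLinearMap E (𝕜 := ℂ))
  have hrad : spectralRadius ℂ a < 1 := by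
    have hμ' : ‖μ‖₊ < 1 := hμ
    refine lt_of_le_of_lt (iSup₂_le fun z hz => ?_) (ENNReal.coe_lt_one_iff.2 hμ')
    rw [hspec hz]
  filter_upwards [eventually_norm_pow_le_one_of_spectralRadius_lt_one hrad] with n hn x
  calc ‖(f ^ n) x‖ = ‖(a ^ n) x‖ := by rw [← map_pow]; rfl
    _ ≤ ‖a ^ n‖ * ‖x‖ := (a ^ n).le_opNorm x
    _ ≤ ‖x‖ := mul_le_of_le_one_left (norm_nonneg x) hn

theorem eventually_norm_pow_apply_le_of_mem_maxGenEigenspace (hμ : ‖μ‖ < 1) :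
    ∀ᶠ n in atTop, ∀ x ∈ f.maxGenEigenspace μ, ‖(f ^ n) x‖ ≤ ‖x‖ := by
  have hmaps := mapsTo_maxGenEigenspace_of_comm (Commute.refl f) μ
  have hnil : IsNilpotent (f.restrict hmaps - algebraMap ℂ _ μ) := by
    convert isNilpotent_restrict_maxGenEigenspace_sub_algebraMap f μ using 1
    ext
    rfl
  filter_upwards [eventually_norm_pow_apply_le_of_isNilpotent_sub hμ hnil] with n hn x hx
  have := hn ⟨x, hx⟩
  rwa [pow_restrict n hmaps] at this

end Module.End

namespace DirectSum.IsInternal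

variable {ι R : Type*} [Fintype ι] [DecidableEq ι] [Ring R]

section Algebraic

variable {E : Type*} [AddCommGroup E] [Module R E] {V : ι → Submodule R E}

noncomputable def equivPi (h : IsInternal V) : E ≃ₗ[R] Π i, V i :=
  (LinearEquiv.ofBijective (coeLinearMap V) h).symm ≪≫ₗ linearEquivFunOnFintype R ι (V ·)

theorem equivPi_symm_apply (h : IsInternal V) (y : Π i, V i) :
    h.equivPi.symm y = ∑ i, (y i : E) := by
  conv_lhs => rw [← Finset.univ_sum_single y]
  simp only [equivPi, LinearEquiv.trans_symm, LinearEquiv.symm_symm, LinearEquiv.trans_apply,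
    map_sum, linearEquivFunOnFintype_symm_single]
  exact Finset.sum_congr rfl fun i _ => coeLinearMap_of V i (y i)

theorem equivPi_map_apply (h : IsInternal V) {g : End R E} (hg : ∀ i, MapsTo g (V i) (V i))
    (x : E) (i : ι) : (h.equivPi (g x) i : E) = g (h.equivPi x i) := by
  have : h.equivPi (g x) = fun i => ⟨g (h.equivPi x i), hg i (h.equivPi x i).2⟩ := by
    apply h.equivPi.symm.injective
    rw [LinearEquiv.symm_apply_apply, equivPi_symm_apply]
    conv_lhs => rw [← h.equivPi.symm_apply_apply x, equivPi_symm_apply, map_sum]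
  rw [this]

end Algebraic

theorem norm_toLp_equivPi_map_le {E : Type*} [NormedAddCommGroup E] [Module R E]
    {V : ι → Submodule R E} (h : IsInternal V) {g : End R E} (hg : ∀ i, MapsTo g (V i) (V i))
    (hc : ∀ i, ∀ x ∈ V i, ‖g x‖ ≤ ‖x‖) (x : E) :
    ‖WithLp.toLp 2 (h.equivPi (g x))‖ ≤ ‖WithLp.toLp 2 (h.equivPi x)‖ := by
  simp only [PiLp.norm_eq_of_L2, Submodule.coe_norm, h.equivPi_map_apply hg]
  gcongr with i
  exact hc i _ (h.equivPi x i).2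

end DirectSum.IsInternal

theorem exists_injective_norm_map_le_of_norm_pow_map_le {R E F : Type*} [Ring R]
    [AddCommGroup E] [Module R E] [SeminormedAddCommGroup F] [Module R F] {f : End R E}
    {T : E →ₗ[R] F} (hT : Injective T) {k : ℕ} (hk : 0 < k)
    (hf : ∀ x, ‖T ((f ^ k) x)‖ ≤ ‖T x‖) :
    ∃ T' : E →ₗ[R] PiLp 2 (fun _ : Fin k => F), Injective T' ∧ ∀ x, ‖T' (f x)‖ ≤ ‖T' x‖ := by
  let T' : E →ₗ[R] PiLp 2 (fun _ : Fin k => F) :=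
    (WithLp.linearEquiv 2 R _).symm.toLinearMap ∘ₗ LinearMap.pi fun i => T ∘ₗ f ^ (i : ℕ)
  have hnorm (x : E) : ‖T' x‖ ^ 2 = ∑ i ∈ Finset.range k, ‖T ((f ^ i) x)‖ ^ 2 := by
    rw [PiLp.norm_sq_eq_of_L2]
    exact Fin.sum_univ_eq_sum_range (fun i => ‖T ((f ^ i) x)‖ ^ 2) k
  refine ⟨T', fun x y hxy => hT ?_, fun x => ?_⟩
  · simpa [T'] using congrArg (fun z => z ⟨0, hk⟩) hxy
  · have hshift : ‖T' (f x)‖ ^ 2 + ‖T x‖ ^ 2 = ‖T' x‖ ^ 2 + ‖T ((f ^ k) x)‖ ^ 2 := by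
      simp only [hnorm, ← Module.End.mul_apply, ← pow_succ]
      simpa using (Finset.sum_range_succ' (fun i => ‖T ((f ^ i) x)‖ ^ 2) k).symm.trans
        (Finset.sum_range_succ _ k)
    have := pow_le_pow_left₀ (norm_nonneg _) (hf x) 2
    exact pow_le_pow_iff_left₀ (norm_nonneg _) (norm_nonneg _) two_ne_zero |>.1 (by linarith)

theorem exists_linearEquiv_norm_eq_of_injective {𝕜 E F : Type*} [RCLike 𝕜]
    [NormedAddCommGroup E] [InnerProductSpace 𝕜 E] [FiniteDimensional 𝕜 E]
    [NormedAddCommGroup F] [InnerProductSpace 𝕜 F] {T : E →ₗ[𝕜] F} (hT : Injective T) :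
    ∃ S : E ≃ₗ[𝕜] E, ∀ x, ‖S x‖ = ‖T x‖ := by
  let e := LinearEquiv.ofInjective T hT
  let I := (stdOrthonormalBasis 𝕜 (LinearMap.range T)).equiv (stdOrthonormalBasis 𝕜 E)
    (finCongr e.finrank_eq.symm)
  exact ⟨e ≪≫ₗ I.toLinearEquiv, fun x => by simp [e]⟩

theorem Module.End.exists_linearEquiv_norm_map_le {E : Type*} [NormedAddCommGroup E]
    [InnerProductSpace ℂ E] [FiniteDimensional ℂ E] (f : End ℂ E)
    (hspec : ∀ μ, f.HasEigenvalue μ → ‖μ‖ ≤ 1)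
    (hsemi : ∀ μ, f.HasEigenvalue μ → ‖μ‖ = 1 → f.eigenspace μ = f.maxGenEigenspace μ) :
    ∃ S : E ≃ₗ[ℂ] E, ∀ x, ‖S (f x)‖ ≤ ‖S x‖ := by
  classical
  let ι := {μ // f.maxGenEigenspace μ ≠ ⊥}
  have : Fintype ι :=
    (WellFoundedGT.finite_ne_bot_of_iSupIndep f.independent_maxGenEigenspace).fintype
  have hint : DirectSum.IsInternal fun μ : ι => f.maxGenEigenspace μ :=
    DirectSum.isInternal_ne_bot_iff.2 <|
      (DirectSum.isInternal_submodule_iff_iSupIndep_and_iSup_eq_top _).2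
        ⟨f.independent_maxGenEigenspace, f.iSup_maxGenEigenspace_eq_top⟩
  have hmaps (n : ℕ) (μ : ι) : MapsTo (f ^ n) (f.maxGenEigenspace μ) (f.maxGenEigenspace μ) :=
    mapsTo_maxGenEigenspace_of_comm ((Commute.refl f).pow_right n) μ
  have hblock (μ : ι) : ∀ᶠ n in atTop, ∀ x ∈ f.maxGenEigenspace μ, ‖(f ^ n) x‖ ≤ ‖x‖ := by
    have hμ : f.HasEigenvalue μ :=
      (hasUnifEigenvalue_iff_hasUnifEigenvalue_one (k := ⊤) WithTop.top_pos).1 μ.2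
    rcases (hspec μ hμ).lt_or_eq with hlt | heq
    · exact eventually_norm_pow_apply_le_of_mem_maxGenEigenspace hlt
    · refine Eventually.of_forall fun n x hx => ?_
      rw [← hsemi μ hμ heq] at hx
      exact (norm_pow_apply_eq_of_mem_eigenspace heq hx n).le
  obtain ⟨k, hk, hk1⟩ := ((eventually_all.2 hblock).and (eventually_ge_atTop 1)).exists
  obtain ⟨T, hT, hTf⟩ := exists_injective_norm_map_le_of_norm_pow_map_le
    (T := (hint.equivPi ≪≫ₗ (WithLp.linearEquiv 2 ℂ _).symm).toLinearMap)
    (LinearEquiv.injective _) hk1 (hint.norm_toLp_equivPi_map_le (hmaps k) hk)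
  obtain ⟨S, hS⟩ := exists_linearEquiv_norm_eq_of_injective hT
  exact ⟨S, fun x => by simpa only [hS] using hTf x⟩

theorem Matrix.exists_isUnit_l2_opNorm_mul_mul_inv_le_one {𝕜 n : Type*} [RCLike 𝕜] [Fintype n]
    [DecidableEq n] {M : Matrix n n 𝕜} (S : EuclideanSpace 𝕜 n ≃ₗ[𝕜] EuclideanSpace 𝕜 n)
    (hS : ∀ x, ‖S (toEuclideanLin M x)‖ ≤ ‖S x‖) :
    ∃ P : Matrix n n 𝕜, IsUnit P ∧ ‖P * M * P⁻¹‖ ≤ 1 := by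
  let U := Units.map ((toEuclideanCLM (𝕜 := 𝕜) (n := n)).symm : _ →* Matrix n n 𝕜)
    S.toContinuousLinearEquiv.toUnit
  refine ⟨U, U.isUnit, ?_⟩
  rw [← coe_units_inv, ← l2_opNorm_toEuclideanCLM, map_mul, map_mul]
  refine ContinuousLinearMap.opNorm_le_bound _ zero_le_one fun x => ?_
  simp only [U, Units.coe_map, Units.coe_map_inv, MonoidHom.coe_coe, StarAlgEquiv.apply_symm_apply,
    one_mul]
  have := hS (S.symm x)
  rw [S.apply_symm_apply] at this
  exact this

/-- a matrix with spectral radius at most 1 whose eigenvalues of modulus 1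
are semisimple (geometric multiplicity = algebraic multiplicity) is similar to a
contraction in the `ℓ²` operator norm. -/
theorem similar_to_contraction (n : ℕ) (M : Matrix (Fin n) (Fin n) ℂ)
    (hspec : ∀ lam : ℂ, Module.End.HasEigenvalue M.mulVecLin lam → ‖lam‖ ≤ 1)
    (hsemi : ∀ lam : ℂ, Module.End.HasEigenvalue M.mulVecLin lam → ‖lam‖ = 1 →
      Module.End.eigenspace M.mulVecLin lam = Module.End.maxGenEigenspace M.mulVecLin lam) :
    ∃ S : Matrix (Fin n) (Fin n) ℂ, IsUnit S ∧ ‖S * M * S⁻¹‖ ≤ 1 := by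
  let e := (WithLp.linearEquiv 2 ℂ (Fin n → ℂ)).symm
  have hM : toEuclideanLin M = e.conj M.mulVecLin := by
    ext
    rfl
  have hev (μ : ℂ) : (e.conj M.mulVecLin).HasEigenvalue μ ↔ End.HasEigenvalue M.mulVecLin μ := by
    simp [End.HasEigenvalue, End.HasUnifEigenvalue, End.genEigenspace_conj]
  obtain ⟨S, hS⟩ := (e.conj M.mulVecLin).exists_linearEquiv_norm_map_le
    (fun μ hμ => hspec μ ((hev μ).1 hμ)) fun μ hμ h1 => by
      rw [End.eigenspace, End.maxGenEigenspace, End.genEigenspace_conj, End.genEigenspace_conj]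
      exact congrArg _ (hsemi μ ((hev μ).1 hμ) h1)
  exact exists_isUnit_l2_opNorm_mul_mul_inv_le_one S (hM ▸ hS)
end

section
/- Let (a_t)_{t∈ℕ₀} be a sequence such that a_t = tr(A·T^t(ρ)) decays algebraically, e.g., a_t = 1/(t+1), for a trace-preserving linear map T on M_d(ℂ). Then no finite d suffices: the space 𝒱 of delayed vectors of the sequence (1/(t+1))_{t≥0} is infinite-dimensional. -/
/-!
The delayed vector of `1/(t+1)` at delay `j` is the moment sequence `k ↦ ∫₀¹ xᵏ xʲ dx` of the
monomial `xʲ`. A polynomial all of whose moments on `[0,1]` vanish is orthogonal to itself, hence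
zero; so the moment map is injective and the delayed vectors inherit the linear independence of
the monomials. On the other hand, the delayed vectors of a readout `t ↦ f (Tᵗ x)` of a linear
dynamics all lie in the range of `y ↦ (k ↦ f (Tᵏ y))`, which is finite-dimensional when the state
space is.
-/

open Matrix Polynomial MeasureTheory intervalIntegral Set Submodule
open scoped ComplexOrder

def delayedVectors {K : Type*} (a : ℕ → K) (τ : ℕ) : ℕ → K := fun k => a (τ + k)

section FiniteDimension

variable {K S V : Type*} [Field K] [Semiring S] [Module K S] [AddCommGroup V] [Module K V]
  [Module S V] [IsScalarTower K S V]

theorem finiteDimensional_span_delayedVectors [FiniteDimensional K V] (T : Module.End S V)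
    (f : V →ₗ[K] K) (x : V) :
    FiniteDimensional K (span K (range (delayedVectors fun t => f ((T ^ t) x)))) := by
  let Φ : V →ₗ[K] ℕ → K := LinearMap.pi fun k => f ∘ₗ (T ^ k).restrictScalars K
  refine Submodule.finiteDimensional_of_le (span_le.mpr ?_ : _ ≤ LinearMap.range Φ)
  rintro _ ⟨τ, rfl⟩
  refine ⟨(T ^ τ) x, funext fun k => ?_⟩
  simp [Φ, delayedVectors, add_comm τ, pow_add, Module.End.mul_apply]

end FiniteDimension

noncomputable def unitIntervalMoments : ℝ[X] →ₗ[ℝ] ℕ → ℝ where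
  toFun p k := ∫ x in (0 : ℝ)..1, x ^ k * p.eval x
  map_add' p q := by
    funext k
    simp only [eval_add, mul_add, Pi.add_apply]
    exact intervalIntegral.integral_add ((by fun_prop : Continuous _).intervalIntegrable _ _)
      ((by fun_prop : Continuous _).intervalIntegrable _ _)
  map_smul' c p := by
    funext k
    simp only [eval_smul, smul_eq_mul, mul_left_comm _ c, intervalIntegral.integral_const_mul,
      Pi.smul_apply, RingHom.id_apply]

theorem unitIntervalMoments_X_pow (j : ℕ) :
    unitIntervalMoments (X ^ j) = delayedVectors (fun t : ℕ => 1 / ((t : ℝ) + 1)) j := by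
  funext k
  simp [unitIntervalMoments, delayedVectors, ← pow_add, integral_pow, add_comm k]

theorem integral_eval_mul_self_eq_sum (p : ℝ[X]) :
    ∫ x in (0 : ℝ)..1, p.eval x * p.eval x =
      ∑ i ∈ Finset.range (p.natDegree + 1), p.coeff i * unitIntervalMoments p i := by
  simp only [unitIntervalMoments, LinearMap.coe_mk, AddHom.coe_mk,
    ← intervalIntegral.integral_const_mul]
  rw [← integral_finsetSum fun i _ => (by fun_prop : Continuous _).intervalIntegrable _ _]
  congr 1 with x
  conv_lhs => enter [1]; rw [eval_eq_sum_range]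
  rw [Finset.sum_mul]
  exact Finset.sum_congr rfl fun i _ => by ring

theorem Polynomial.eq_zero_of_integral_eval_mul_self_eq_zero {a b : ℝ} (hab : a < b) (p : ℝ[X])
    (h : ∫ x in a..b, p.eval x * p.eval x = 0) : p = 0 := by
  have hcont : Continuous fun x => p.eval x * p.eval x := by fun_prop
  rw [integral_eq_zero_iff_of_le_of_nonneg_ae hab.le
    (Filter.Eventually.of_forall fun x => mul_self_nonneg _) (hcont.intervalIntegrable _ _)] at h
  have hzero : EqOn (fun x => p.eval x * p.eval x) 0 (Ioo a b) :=
    Measure.eqOn_open_of_ae_eq (ae_restrict_of_ae_restrict_of_subset Ioo_subset_Ioc_self h)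
      isOpen_Ioo hcont.continuousOn continuousOn_const
  refine eq_zero_of_infinite_isRoot p ((Ioo_infinite hab).mono fun x hx => ?_)
  exact mul_self_eq_zero.mp (hzero hx)

theorem ker_unitIntervalMoments : LinearMap.ker unitIntervalMoments = ⊥ := by
  refine LinearMap.ker_eq_bot'.mpr fun p hp => ?_
  refine eq_zero_of_integral_eval_mul_self_eq_zero zero_lt_one p ?_
  simp [integral_eval_mul_self_eq_sum, hp]

theorem linearIndependent_delayedVectors_inv_succ :
    LinearIndependent ℝ (delayedVectors fun t : ℕ => 1 / ((t : ℝ) + 1)) := by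
  have hmonomials : LinearIndependent ℝ fun j => (X ^ j : ℝ[X]) := by
    simpa [coe_basisMonomials, ← X_pow_eq_monomial] using (basisMonomials ℝ).linearIndependent
  rw [show delayedVectors _ = unitIntervalMoments ∘ fun j => X ^ j from
    funext fun j => (unitIntervalMoments_X_pow j).symm]
  exact hmonomials.map' _ ker_unitIntervalMoments

theorem not_finiteDimensional_span_delayedVectors_inv_succ :
    ¬ FiniteDimensional ℝ (span ℝ (range (delayedVectors fun t : ℕ => 1 / ((t : ℝ) + 1)))) :=
  fun _ => Module.Finite.not_linearIndependent_of_infinite _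
    (linearIndependent_span linearIndependent_delayedVectors_inv_succ)

/-- the space of delayed vectors of the algebraically decaying sequence
`a t = 1/(t+1)` is infinite dimensional; consequently no finite-dimensional
trace-preserving linear evolution `tr(A Tᵗ(ρ))` can produce it. -/
theorem algebraic_decay_needs_infinite_dimension
    (v : ℕ → ℕ → ℝ) (hv : ∀ τ k : ℕ, v τ k = 1 / (τ + k + 1)) :
    ¬ FiniteDimensional ℝ ↥(Submodule.span ℝ (Set.range v)) ∧
      ∀ (d : ℕ) (T : Module.End ℂ (Matrix (Fin d) (Fin d) ℂ)),
        (∀ X, (T X).trace = X.trace) →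
        ∀ (ρ : Matrix (Fin d) (Fin d) ℂ), ρ.PosSemidef → ρ.trace = 1 →
        ∀ A : Matrix (Fin d) (Fin d) ℂ, A.IsHermitian →
        ¬ (∀ t : ℕ, (A * ((T ^ t) ρ)).trace = 1 / (t + 1)) := by
  obtain rfl : v = delayedVectors fun t : ℕ => 1 / ((t : ℝ) + 1) := by
    funext τ k
    simp [hv, delayedVectors]
  refine ⟨not_finiteDimensional_span_delayedVectors_inv_succ, ?_⟩
  intro d T _ ρ _ _ A _ hdecay
  apply not_finiteDimensional_span_delayedVectors_inv_succ
  let readout : Matrix (Fin d) (Fin d) ℂ →ₗ[ℝ] ℝ :=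
    Complex.reLm ∘ₗ (traceLinearMap (Fin d) ℂ ℂ).restrictScalars ℝ ∘ₗ
      (LinearMap.mulLeft ℂ A).restrictScalars ℝ
  have hreadout : (fun t : ℕ => 1 / ((t : ℝ) + 1)) = fun t => readout ((T ^ t) ρ) := by
    funext t
    simp only [readout, LinearMap.coe_comp, Function.comp_apply, LinearMap.restrictScalars_apply,
      LinearMap.mulLeft_apply, traceLinearMap_apply, Complex.reLm_coe, hdecay]
    rw [← Complex.ofReal_re (1 / ((t : ℝ) + 1))]
    push_cast
    rfl
  rw [hreadout]
  exact finiteDimensional_span_delayedVectors T readout ρ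
end
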